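/- Let ν be a valuation on K[x], let n ∈ ℕ be such that Ψ_n ≠ ∅ and {ν(Q) : Q ∈ Ψ_n} has no maximal element, and let Q_n be a limit key polynomial for Ψ_n. Then δ(Q) < δ(Q_n) for every Q ∈ Ψ_n, and consequently deg(Q_n) ≥ n. -/

import Mathlib

open Polynomial

/-- An additive valuation (possibly with nontrivial support) on a commutative
ring `R`, with values in `Γ ∪ {∞}`. -/
structure ValOn (R : Type*) [CommRing R] (Γ : Type*) [AddCommGroup Γ] [LinearOrder Γ] [IsOrderedAddMonoid Γ] where
  v : R → WithTop Γ
  v_zero : v 0 = ⊤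
  v_one : v 1 = 0
  v_mul : ∀ a b, v (a * b) = v a + v b
  min_le_v_add : ∀ a b, min (v a) (v b) ≤ v (a + b)

namespace ValOn

variable {R : Type*} [CommRing R] {Γ : Type*} [AddCommGroup Γ] [LinearOrder Γ] [IsOrderedAddMonoid Γ]

theorem v_neg (w : ValOn R Γ) (a : R) : w.v (-a) = w.v a := by
  have h1 : w.v (-1) + w.v (-1) = 0 := by
    rw [← w.v_mul]; norm_num [w.v_one]
  have h2 : w.v (-1) = 0 := by
    cases hx : w.v (-1) with
    | top => rw [hx] at h1; simp at h1
    | coe x =>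
        rw [hx, ← WithTop.coe_add, ← WithTop.coe_zero, WithTop.coe_inj] at h1
        have hx0 : x = 0 := by
          rcases lt_trichotomy x 0 with hc | hc | hc
          · exact absurd h1 (ne_of_lt (add_neg hc hc))
          · exact hc
          · exact absurd h1 (ne_of_gt (add_pos hc hc))
        rw [hx0, WithTop.coe_zero]
  calc w.v (-a) = w.v (-1 * a) := by rw [neg_one_mul]
  _ = w.v a := by rw [w.v_mul, h2, zero_add]

theorem le_v_sum (w : ValOn R Γ) {α : Type*} {γ : WithTop Γ} (s : Finset α) (h : α → R)
    (H : ∀ t ∈ s, γ ≤ w.v (h t)) : γ ≤ w.v (∑ t ∈ s, h t) := by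
  classical
  induction s using Finset.induction_on with
  | empty => simp [w.v_zero]
  | insert _ _ hx ih =>
      rw [Finset.sum_insert hx]
      refine le_trans ?_ (w.min_le_v_add _ _)
      rw [le_min_iff]
      exact ⟨H _ (Finset.mem_insert_self _ _),
        ih fun t ht => H t (Finset.mem_insert_of_mem ht)⟩

theorem lt_v_sum (w : ValOn R Γ) {α : Type*} {γ : WithTop Γ} (hγ : γ ≠ ⊤) (s : Finset α)
    (h : α → R) (H : ∀ t ∈ s, γ < w.v (h t)) : γ < w.v (∑ t ∈ s, h t) := by
  classical
  induction s using Finset.induction_on with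
  | empty => simp [w.v_zero]; exact lt_top_iff_ne_top.mpr hγ
  | insert _ _ hx ih =>
      rw [Finset.sum_insert hx]
      refine lt_of_lt_of_le ?_ (w.min_le_v_add _ _)
      rw [lt_min_iff]
      exact ⟨H _ (Finset.mem_insert_self _ _),
        ih fun t ht => H t (Finset.mem_insert_of_mem ht)⟩

/-- The subring `⊕_{γ ∈ Γ} P_γ` of the monoid algebra `R[Γ]`, where
`P_γ = {f : γ ≤ v f}`.  The graded ring `G_v = ⊕_γ P_γ/P_γ⁺` is realized below as the
quotient of this subring by the ideal `⊕_γ P_γ⁺`. -/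
def gradedCarrier (w : ValOn R Γ) : Subring (AddMonoidAlgebra R Γ) where
  carrier := {s | ∀ γ : Γ, (γ : WithTop Γ) ≤ w.v (s.coeff γ)}
  zero_mem' := by intro γ; simp [w.v_zero]
  one_mem' := by
    intro γ
    classical
    show (γ : WithTop Γ) ≤ w.v ((AddMonoidAlgebra.single (0:Γ) (1:R)).coeff γ)
    rw [AddMonoidAlgebra.coeff_single_apply]
    split_ifs with h
    · subst h; simp [w.v_one]
    · simp [w.v_zero]
  add_mem' := by
    intro a b ha hb γ
    refine le_trans ?_ (w.min_le_v_add _ _)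
    exact le_min (ha γ) (hb γ)
  neg_mem' := by
    intro a ha γ
    show (γ : WithTop Γ) ≤ w.v ((-a).coeff γ)
    rw [AddMonoidAlgebra.coeff_neg, Finsupp.neg_apply, w.v_neg]
    exact ha γ
  mul_mem' := by
    classical
    intro a b ha hb γ
    rw [AddMonoidAlgebra.coeff_mul]
    rw [Finsupp.sum]
    refine w.le_v_sum _ _ (fun α hα => ?_)
    rw [Finsupp.sum]
    refine w.le_v_sum _ _ (fun β hβ => ?_)
    split_ifs with h
    · subst h
      rw [w.v_mul, WithTop.coe_add]
      exact add_le_add (ha α) (hb β)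
    · simp [w.v_zero]

/-- The ideal `⊕_{γ ∈ Γ} P_γ⁺` of `gradedCarrier w`. -/
def gradedIdeal (w : ValOn R Γ) : Ideal (gradedCarrier w) where
  carrier := {s | ∀ γ : Γ, (γ : WithTop Γ) < w.v ((s : AddMonoidAlgebra R Γ).coeff γ)}
  zero_mem' := by intro γ; simp [w.v_zero]
  add_mem' := by
    intro a b ha hb γ
    refine lt_of_lt_of_le ?_ (w.min_le_v_add _ _)
    exact lt_min (ha γ) (hb γ)
  smul_mem' := by
    classical
    intro c x hx γ
    rw [smul_eq_mul]
    show (γ : WithTop Γ) < w.v (((c : AddMonoidAlgebra R Γ) * (x : AddMonoidAlgebra R Γ)).coeff γ)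
    rw [AddMonoidAlgebra.coeff_mul, Finsupp.sum]
    refine w.lt_v_sum (WithTop.coe_ne_top) _ _ (fun α hα => ?_)
    rw [Finsupp.sum]
    refine w.lt_v_sum (WithTop.coe_ne_top) _ _ (fun β hβ => ?_)
    split_ifs with h
    · subst h
      rw [w.v_mul, WithTop.coe_add]
      exact WithTop.add_lt_add_of_le_of_lt WithTop.coe_ne_top (c.2 α) (hx β)
    · simp [w.v_zero]
end ValOn

/-- The graded ring `G_w = ⊕_{γ} P_γ/P_γ⁺` associated to the valuation `w`,
realized as a quotient. -/
abbrev Graded {R : Type*} [CommRing R] {Γ : Type*} [AddCommGroup Γ] [LinearOrder Γ] [IsOrderedAddMonoid Γ]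
    (w : ValOn R Γ) : Type _ :=
  (ValOn.gradedCarrier w) ⧸ (ValOn.gradedIdeal w)

namespace ValOn

variable {R : Type*} [CommRing R] {Γ : Type*} [AddCommGroup Γ] [LinearOrder Γ] [IsOrderedAddMonoid Γ]

/-- `inv_w f`, the initial form (image of `f` in the homogeneous component
`P_{v f}/P_{v f}⁺` of the graded ring), with `inv_w f = 0` when `f ∈ supp w`. -/
noncomputable def initialForm (w : ValOn R Γ) (f : R) : Graded w :=
  if h : w.v f = ⊤ then 0
  else Ideal.Quotient.mk (gradedIdeal w)
    ⟨AddMonoidAlgebra.single ((w.v f).untop h) f, by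
      intro γ
      classical
      show (γ : WithTop Γ) ≤ w.v ((AddMonoidAlgebra.single ((w.v f).untop h) f).coeff γ)
      rw [AddMonoidAlgebra.coeff_single_apply]
      split_ifs with hh
      · rw [← hh, WithTop.coe_untop]
      · simp [w.v_zero]⟩

theorem gradedCarrier_mono {w₁ w₂ : ValOn R Γ} (h : ∀ f, w₁.v f ≤ w₂.v f) :
    gradedCarrier w₁ ≤ gradedCarrier w₂ :=
  fun s hs γ => (hs γ).trans (h _)

/-- The homomorphism `φ : G_{w₁} → G_{w₂}` of graded rings, for `w₁ ≤ w₂`: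
it sends `inv_{w₁} f` to `inv_{w₂} f` if `w₁ f = w₂ f` and to `0` if `w₁ f < w₂ f`. -/
noncomputable def phi (w₁ w₂ : ValOn R Γ) (h : ∀ f, w₁.v f ≤ w₂.v f) :
    Graded w₁ →+* Graded w₂ :=
  Ideal.Quotient.lift (gradedIdeal w₁)
    ((Ideal.Quotient.mk (gradedIdeal w₂)).comp (Subring.inclusion (gradedCarrier_mono h)))
    (by
      intro a ha
      rw [RingHom.comp_apply, Ideal.Quotient.eq_zero_iff_mem]
      exact fun γ => lt_of_lt_of_le (ha γ) (h _))

end ValOn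


open ValOn

section PolyDefs

variable {K : Type*} [Field K] {Γ : Type*} [AddCommGroup Γ] [LinearOrder Γ] [IsOrderedAddMonoid Γ]

/-- A polynomial `f` is `𝔳`-stable for a family `𝔳 = (ν_i)_{i ∈ I}` if the values `ν_i(f)`
eventually stabilize. -/
def Stable {I : Type*} [Preorder I] (ν : I → ValOn (Polynomial K) Γ) (f : Polynomial K) : Prop :=
  ∃ i : I, ∀ j : I, i ≤ j → (ν j).v f = (ν i).v f

/-- The truncation `w_q` of `w` at `q`:
`w_q(f) = min_j w(f_j q^j)` where `f = ∑ f_j q^j` is the `q`-expansion of `f`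
(for monic non-constant `q`, the `j`-th coefficient of the `q`-expansion is
`(f /ₘ q^j) %ₘ q`, and all the nonzero coefficients occur for `j ≤ natDegree f`). -/
noncomputable def truncVal (w : ValOn (Polynomial K) Γ) (q f : Polynomial K) : WithTop Γ :=
  (Finset.range (f.natDegree + 1)).inf' Finset.nonempty_range_add_one
    (fun j => w.v (((f /ₘ q ^ j) %ₘ q) * q ^ j))

/-- `δ(f) = max {ν̄(x - a) : a a root of f}` for a polynomial over an algebraically closed
field, with the convention `δ(f) = ⊥ = -∞` when `f` has no roots (e.g. `deg f = 0`). -/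
noncomputable def deltaOf {F : Type*} [Field F] (wbar : ValOn (Polynomial F) Γ)
    (f : Polynomial F) : WithBot (WithTop Γ) :=
  (f.roots.map (fun a => ((wbar.v (X - C a) : WithTop Γ) : WithBot (WithTop Γ)))).sup

/-- `δ(f)` of `f ∈ K[x]`, computed via the fixed extension `ν̄` of `ν` to `K̄[x]`. -/
noncomputable def delta (wbar : ValOn (Polynomial (AlgebraicClosure K)) Γ)
    (f : Polynomial K) : WithBot (WithTop Γ) :=
  deltaOf wbar (f.map (algebraMap K (AlgebraicClosure K)))

/-- `Q` is a key polynomial (of level `δ(Q)`) for the valuation `ν` (with fixed extension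
`ν̄` to `K̄[x]`): `Q` is monic and `δ(f) ≥ δ(Q) → deg f ≥ deg Q` for every nonzero `f`. -/
def IsKeyPoly (wbar : ValOn (Polynomial (AlgebraicClosure K)) Γ) (Q : Polynomial K) : Prop :=
  Q.Monic ∧ ∀ f : Polynomial K, f ≠ 0 → delta wbar Q ≤ delta wbar f → Q.degree ≤ f.degree

/-- `Ψ_n`: the set of key polynomials of degree `n`. -/
def Psi (wbar : ValOn (Polynomial (AlgebraicClosure K)) Γ) (n : ℕ) : Set (Polynomial K) :=
  {Q | IsKeyPoly wbar Q ∧ Q.natDegree = n}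

/-- The set `K_n = {f : ν_Q(f) < ν(f) for all Q ∈ Ψ_n}`. -/
def LimitSet (w : ValOn (Polynomial K) Γ) (wbar : ValOn (Polynomial (AlgebraicClosure K)) Γ)
    (n : ℕ) : Set (Polynomial K) :=
  {f | ∀ Q ∈ Psi wbar n, truncVal w Q f < w.v f}

/-- A limit key polynomial for `Ψ_n`: a monic polynomial in `K_n` of least degree. -/
def IsLimitKeyPoly (w : ValOn (Polynomial K) Γ)
    (wbar : ValOn (Polynomial (AlgebraicClosure K)) Γ) (n : ℕ) (Qn : Polynomial K) : Prop :=
  Qn.Monic ∧ Qn ∈ LimitSet w wbar n ∧ ∀ g ∈ LimitSet w wbar n, Qn.degree ≤ g.degree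

/-- `g` is `𝔳`-stable for the family `𝔳 = (ν_Q)_{Q ∈ Ψ_n}`, ordered by `Q ⪯ Q' ↔ ν_Q ≤ ν_{Q'}`. -/
def PsiStable (w : ValOn (Polynomial K) Γ) (wbar : ValOn (Polynomial (AlgebraicClosure K)) Γ)
    (n : ℕ) (g : Polynomial K) : Prop :=
  ∃ Q ∈ Psi wbar n, ∀ Q' ∈ Psi wbar n,
    (∀ h : Polynomial K, truncVal w Q h ≤ truncVal w Q' h) → truncVal w Q' g = truncVal w Q g

/-- `v` is a Krull valuation: its support is trivial. -/
def IsKrullVal (v : Polynomial K → WithTop Γ) : Prop :=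
  ∀ f : Polynomial K, f ≠ 0 → v f ≠ ⊤

/-- The quotient group `v(K[x])/ν₀K` is a torsion group: every value of `v` has a positive
multiple lying in the value group of `ν₀`. -/
def TorsionOverBase (ν₀ : ValOn K Γ) (v : Polynomial K → WithTop Γ) : Prop :=
  ∀ f : Polynomial K, f ≠ 0 → ∃ m : ℕ, 0 < m ∧ ∃ a : K, a ≠ 0 ∧ m • v f = ν₀.v a

/-- `v` (a valuation on `K[x]` extending `ν₀`) is residue-transcendental: it is Krull and the
residue field extension `K(x)v ∣ Kν₀` is transcendental, i.e. there are `f, g` with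
`v f = v g` whose residue `res(f/g)` is transcendental over `Kν₀`: every polynomial over
`Kν₀` (with coefficients `res(c_i)`, not all zero) does not vanish at `res(f/g)`. -/
def ResidueTranscendental (ν₀ : ValOn K Γ) (v : Polynomial K → WithTop Γ) : Prop :=
  IsKrullVal v ∧ ∃ f g : Polynomial K, f ≠ 0 ∧ g ≠ 0 ∧ v f = v g ∧
    ∀ (n : ℕ) (c : ℕ → K), (∀ i, 0 ≤ ν₀.v (c i)) → (∃ i, i ≤ n ∧ ν₀.v (c i) = 0) →
      v (∑ i ∈ Finset.range (n + 1), Polynomial.C (c i) * f ^ i * g ^ (n - i)) = v (g ^ n)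

/-- `v` is value-transcendental: it is not Krull, or `v(K[x])/ν₀K` is not torsion. -/
def ValueTranscendental (ν₀ : ValOn K Γ) (v : Polynomial K → WithTop Γ) : Prop :=
  ¬ IsKrullVal v ∨ ¬ TorsionOverBase ν₀ v

/-- `v` is valuation-transcendental. -/
def ValuationTranscendental (ν₀ : ValOn K Γ) (v : Polynomial K → WithTop Γ) : Prop :=
  ValueTranscendental ν₀ v ∨ ResidueTranscendental ν₀ v

/-- `v` is valuation-algebraic. -/
def ValuationAlgebraic (ν₀ : ValOn K Γ) (v : Polynomial K → WithTop Γ) : Prop :=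
  ¬ ValuationTranscendental ν₀ v

end PolyDefs

/-!
If `δ(f) ≤ δ(Q)` for a key polynomial `Q`, then `ν(f) ≤ ν_Q(f)`, so `f ∉ K_n`. Hence
`δ(Q) < δ(Q_n)`, and the key property of `Q` then gives `deg Q_n ≥ deg Q`.

To compare `ν` with `ν_Q`, take a root `a` of `Q` with `ν̄(x - a) = δ(Q)` and the monomial
(Gauss) valuation `μ` of `K̄[x]` centred at `a` with weight `δ(Q)`. Splitting polynomials into
linear factors shows that `μ` agrees with `ν̄` on every `g` with `δ(g) ≤ δ(Q)`, and that on
polynomials of degree `< deg Q`, whose roots are all farther from `a` since `Q` is a key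
polynomial, it is given by evaluation at `a`. As `Q(a) = 0`, this gives `μ(g) ≤ μ(g mod Q)` for
all `g`, which makes every term of the `Q`-expansion of `f` have value at least `μ(f) = ν(f)`.
-/

open Finset

namespace ValOn

variable {R : Type*} [CommRing R] {Γ : Type*} [AddCommGroup Γ] [LinearOrder Γ] [IsOrderedAddMonoid Γ]

theorem v_pow (u : ValOn R Γ) (a : R) (n : ℕ) : u.v (a ^ n) = n • u.v a := by
  induction n with
  | zero => simpa using u.v_one
  | succ n ih => rw [pow_succ, u.v_mul, ih, succ_nsmul]

theorem v_multiset_prod (u : ValOn R Γ) (s : Multiset R) : u.v s.prod = (s.map u.v).sum := by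
  induction s using Multiset.induction_on with
  | empty => simpa using u.v_one
  | cons a s ih => rw [Multiset.prod_cons, u.v_mul, Multiset.map_cons, Multiset.sum_cons, ih]

theorem min_le_v_sub (u : ValOn R Γ) (a b : R) : min (u.v a) (u.v b) ≤ u.v (a - b) := by
  simpa [sub_eq_add_neg, u.v_neg] using u.min_le_v_add a (-b)

theorem v_add_of_lt (u : ValOn R Γ) {a b : R} (h : u.v a < u.v b) : u.v (a + b) = u.v a := by
  refine le_antisymm ?_ ((le_min le_rfl h.le).trans (u.min_le_v_add a b))
  by_contra! hlt
  have := u.min_le_v_sub (a + b) b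
  rw [add_sub_cancel_right] at this
  exact this.not_gt (lt_min hlt h)

def comap {S : Type*} [CommRing S] (u : ValOn S Γ) (φ : R →+* S) : ValOn R Γ where
  v r := u.v (φ r)
  v_zero := by rw [map_zero, u.v_zero]
  v_one := by rw [map_one, u.v_one]
  v_mul a b := by rw [map_mul, u.v_mul]
  min_le_v_add a b := by rw [map_add]; exact u.min_le_v_add _ _

theorem comap_v {S : Type*} [CommRing S] (u : ValOn S Γ) (φ : R →+* S) (r : R) :
    (u.comap φ).v r = u.v (φ r) := rfl

section Gauss

variable (u : ValOn R Γ) (δ : WithTop Γ)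

def gaussTerm (p : R[X]) (j : ℕ) : WithTop Γ :=
  u.v (p.coeff j) + j • δ

noncomputable def gaussFun (p : R[X]) : WithTop Γ :=
  (range (p.natDegree + 1)).inf' nonempty_range_add_one (u.gaussTerm δ p)

theorem gaussFun_le_gaussTerm (p : R[X]) (j : ℕ) : u.gaussFun δ p ≤ u.gaussTerm δ p j := by
  rcases le_or_gt j p.natDegree with h | h
  · exact inf'_le _ (mem_range_succ_iff.mpr h)
  · rw [gaussTerm, coeff_eq_zero_of_natDegree_lt h, u.v_zero, top_add]
    exact le_top

theorem le_gaussFun_iff {p : R[X]} {γ : WithTop Γ} :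
    γ ≤ u.gaussFun δ p ↔ ∀ j, γ ≤ u.gaussTerm δ p j :=
  ⟨fun h j => h.trans (u.gaussFun_le_gaussTerm δ p j), fun h => le_inf' _ _ fun j _ => h j⟩

theorem exists_first_gaussTerm_eq_gaussFun (p : R[X]) :
    ∃ j, u.gaussTerm δ p j = u.gaussFun δ p ∧
      ∀ i < j, u.gaussFun δ p < u.gaussTerm δ p i := by
  classical
  have hex : ∃ j, u.gaussTerm δ p j = u.gaussFun δ p := by
    obtain ⟨j, -, hj⟩ := exists_mem_eq_inf' nonempty_range_add_one (u.gaussTerm δ p)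
    exact ⟨j, hj.symm⟩
  exact ⟨Nat.find hex, Nat.find_spec hex, fun i hi =>
    (u.gaussFun_le_gaussTerm δ p i).lt_of_ne fun h => Nat.find_min hex hi h.symm⟩

theorem gaussTerm_add_gaussTerm (p q : R[X]) (i l : ℕ) :
    u.gaussTerm δ p i + u.gaussTerm δ q l = u.v (p.coeff i * q.coeff l) + (i + l) • δ := by
  rw [gaussTerm, gaussTerm, u.v_mul, add_nsmul, add_add_add_comm]

theorem min_gaussFun_le_add (p q : R[X]) :
    min (u.gaussFun δ p) (u.gaussFun δ q) ≤ u.gaussFun δ (p + q) := by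
  refine (u.le_gaussFun_iff δ).mpr fun j => ?_
  calc min (u.gaussFun δ p) (u.gaussFun δ q)
      ≤ min (u.gaussTerm δ p j) (u.gaussTerm δ q j) :=
        min_le_min (u.gaussFun_le_gaussTerm δ p j) (u.gaussFun_le_gaussTerm δ q j)
    _ = min (u.v (p.coeff j)) (u.v (q.coeff j)) + j • δ := min_add_add_right _ _ _
    _ ≤ u.gaussTerm δ (p + q) j := by
        rw [gaussTerm, coeff_add]
        exact add_le_add_left (u.min_le_v_add _ _) _

theorem add_gaussFun_le_mul (p q : R[X]) :
    u.gaussFun δ p + u.gaussFun δ q ≤ u.gaussFun δ (p * q) := by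
  refine (u.le_gaussFun_iff δ).mpr fun k => ?_
  obtain ⟨x, hx, hx_min⟩ := exists_min_image (antidiagonal k)
    (fun x => u.v (p.coeff x.1 * q.coeff x.2)) ⟨(0, k), by simp⟩
  calc u.gaussFun δ p + u.gaussFun δ q ≤ u.gaussTerm δ p x.1 + u.gaussTerm δ q x.2 :=
        add_le_add (u.gaussFun_le_gaussTerm δ p _) (u.gaussFun_le_gaussTerm δ q _)
    _ = u.v (p.coeff x.1 * q.coeff x.2) + k • δ := by
        rw [gaussTerm_add_gaussTerm, HasAntidiagonal.mem_antidiagonal.mp hx]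
    _ ≤ u.gaussTerm δ (p * q) k := by
        rw [gaussTerm, coeff_mul]
        exact add_le_add_left (u.le_v_sum _ _ hx_min) _

theorem gaussFun_mul_le (p q : R[X]) :
    u.gaussFun δ (p * q) ≤ u.gaussFun δ p + u.gaussFun δ q := by
  -- for the first indices `j`, `l` where `p` and `q` attain their Gauss values, the summand
  -- `p_j q_l` strictly dominates all other summands of the coefficient of `p * q` in degree `j + l`
  obtain ⟨j, hj, hj_min⟩ := u.exists_first_gaussTerm_eq_gaussFun δ p
  obtain ⟨l, hl, hl_min⟩ := u.exists_first_gaussTerm_eq_gaussFun δ q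
  rcases eq_or_ne (u.gaussFun δ p + u.gaussFun δ q) ⊤ with htop | htop
  · exact htop ▸ le_top
  obtain ⟨hp, hq⟩ := WithTop.add_ne_top.mp htop
  set c : ℕ × ℕ → R := fun x => p.coeff x.1 * q.coeff x.2
  have hlead : u.v (c (j, l)) + (j + l) • δ = u.gaussFun δ p + u.gaussFun δ q := by
    rw [← gaussTerm_add_gaussTerm, hj, hl]
  obtain ⟨hc_top, hδ_top⟩ := WithTop.add_ne_top.mp (hlead ▸ htop)
  have hrest : ∀ x ∈ (antidiagonal (j + l)).erase (j, l), u.v (c (j, l)) < u.v (c x) := by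
    intro x hx
    obtain ⟨hne, hx⟩ := mem_erase.mp hx
    rw [HasAntidiagonal.mem_antidiagonal] at hx
    rw [← WithTop.add_lt_add_iff_right hδ_top, hlead, ← hx, ← gaussTerm_add_gaussTerm]
    rcases lt_or_ge x.1 j with h1 | h1
    · exact WithTop.add_lt_add_of_lt_of_le hq (hj_min _ h1) (u.gaussFun_le_gaussTerm δ q _)
    · have h2 : x.2 < l := by
        by_contra! h2
        exact hne (Prod.ext (by omega) (by omega))
      exact WithTop.add_lt_add_of_le_of_lt hp (u.gaussFun_le_gaussTerm δ p _) (hl_min _ h2)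
  have hcoeff : u.v ((p * q).coeff (j + l)) = u.v (c (j, l)) := by
    rw [coeff_mul]
    change u.v (∑ x ∈ antidiagonal (j + l), c x) = _
    have hjl : (j, l) ∈ antidiagonal (j + l) := HasAntidiagonal.mem_antidiagonal.mpr rfl
    rw [← add_sum_erase _ c hjl]
    exact u.v_add_of_lt (u.lt_v_sum hc_top _ _ hrest)
  calc u.gaussFun δ (p * q) ≤ u.gaussTerm δ (p * q) (j + l) := u.gaussFun_le_gaussTerm δ _ _
    _ = u.gaussFun δ p + u.gaussFun δ q := by rw [gaussTerm, hcoeff, hlead]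

noncomputable def gauss : ValOn R[X] Γ where
  v := u.gaussFun δ
  v_zero := top_le_iff.mp <| (u.le_gaussFun_iff δ).mpr fun j => by
    rw [gaussTerm, coeff_zero, u.v_zero, top_add]
  v_one := by simp [gaussFun, gaussTerm, u.v_one]
  v_mul p q := le_antisymm (u.gaussFun_mul_le δ p q) (u.add_gaussFun_le_mul δ p q)
  min_le_v_add := u.min_gaussFun_le_add δ

theorem gauss_C (c : R) : (u.gauss δ).v (C c) = u.v c := by
  simp [gauss, gaussFun, gaussTerm]

theorem gauss_le_coeff_zero (p : R[X]) : (u.gauss δ).v p ≤ u.v (p.coeff 0) :=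
  (u.gaussFun_le_gaussTerm δ p 0).trans_eq (by simp [gaussTerm])

theorem gauss_X_add_C (c : R) : (u.gauss δ).v (X + C c) = min (u.v c) δ := by
  have h0 : u.gaussTerm δ (X + C c) 0 = u.v c := by simp [gaussTerm]
  have h1 : u.gaussTerm δ (X + C c) 1 = δ := by simp [gaussTerm, u.v_one]
  refine le_antisymm (le_min ?_ ?_) ((u.le_gaussFun_iff δ).mpr fun j => ?_)
  · exact (u.gaussFun_le_gaussTerm δ _ 0).trans_eq h0
  · exact (u.gaussFun_le_gaussTerm δ _ 1).trans_eq h1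
  · match j with
    | 0 => exact h0.symm ▸ min_le_left _ _
    | 1 => exact h1.symm ▸ min_le_right _ _
    | j + 2 => simp [gaussTerm, coeff_X, u.v_zero]

end Gauss

section GaussAt

variable (u : ValOn R[X] Γ)

/-- The monomial valuation `∑ cᵢ (X - a)ⁱ ↦ minᵢ (u(cᵢ) + i • u(X - a))`. -/
noncomputable def gaussAt (a : R) : ValOn R[X] Γ :=
  ((u.comap C).gauss (u.v (X - C a))).comap (compRingHom (X + C a))

theorem gaussAt_C (a c : R) : (u.gaussAt a).v (C c) = u.v (C c) := by
  simp [gaussAt, comap_v, gauss_C]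

theorem gaussAt_le_eval (a : R) (p : R[X]) : (u.gaussAt a).v p ≤ u.v (C (p.eval a)) :=
  ((u.comap C).gauss_le_coeff_zero _ _).trans_eq <| by
    simp [comap_v, coeff_zero_eq_eval_zero, eval_comp]

theorem gaussAt_X_sub_C (a b : R) :
    (u.gaussAt a).v (X - C b) = min (u.v (C (a - b))) (u.v (X - C a)) := by
  have h : (X - C b).comp (X + C a) = X + C (a - b) := by
    simp only [sub_comp, X_comp, C_comp, map_sub]
    ring
  rw [gaussAt, comap_v, coe_compRingHom_apply, h, gauss_X_add_C, comap_v]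

theorem v_C_sub_of_lt {a b : R} (h : u.v (X - C b) < u.v (X - C a)) :
    u.v (C (a - b)) = u.v (X - C b) := by
  have : C (a - b) = (X - C b) + -(X - C a) := by rw [map_sub]; ring
  rw [this, u.v_add_of_lt (by rwa [u.v_neg])]

theorem gaussAt_X_sub_C_of_le {a b : R} (h : u.v (X - C b) ≤ u.v (X - C a)) :
    (u.gaussAt a).v (X - C b) = u.v (X - C b) := by
  rw [gaussAt_X_sub_C]
  rcases h.lt_or_eq with hlt | heq
  · rw [u.v_C_sub_of_lt hlt, min_eq_left hlt.le]
  · have : u.v (X - C a) ≤ u.v (C (a - b)) := by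
      have := u.min_le_v_sub (X - C b) (X - C a)
      rwa [heq, min_self, sub_sub_sub_cancel_left, ← map_sub] at this
    rw [min_eq_right this, heq]

end GaussAt

section IsAlgClosed

variable {F : Type*} [Field F] [IsAlgClosed F] (u : ValOn F[X] Γ)

theorem v_eq_add_sum_roots (g : F[X]) :
    u.v g = u.v (C g.leadingCoeff) + (g.roots.map fun b => u.v (X - C b)).sum := by
  conv_lhs => rw [(IsAlgClosed.splits g).eq_prod_roots]
  rw [u.v_mul, u.v_multiset_prod, Multiset.map_map]
  rfl

theorem v_C_eval_eq_add_sum_roots (g : F[X]) (a : F) :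
    u.v (C (g.eval a)) = u.v (C g.leadingCoeff) + (g.roots.map fun b => u.v (C (a - b))).sum := by
  rw [(IsAlgClosed.splits g).eval_eq_prod_roots, map_mul, u.v_mul, map_multiset_prod,
    u.v_multiset_prod, Multiset.map_map, Multiset.map_map]
  rfl

theorem gaussAt_eq_of_roots_le {a : F} {g : F[X]}
    (h : ∀ b ∈ g.roots, u.v (X - C b) ≤ u.v (X - C a)) : (u.gaussAt a).v g = u.v g := by
  rw [(u.gaussAt a).v_eq_add_sum_roots, u.v_eq_add_sum_roots, gaussAt_C]
  congr 2
  exact Multiset.map_congr rfl fun b hb => u.gaussAt_X_sub_C_of_le (h b hb)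

theorem v_eq_v_C_eval_of_roots_lt {a : F} {g : F[X]}
    (h : ∀ b ∈ g.roots, u.v (X - C b) < u.v (X - C a)) : u.v g = u.v (C (g.eval a)) := by
  rw [v_eq_add_sum_roots, v_C_eval_eq_add_sum_roots]
  congr 2
  exact Multiset.map_congr rfl fun b hb => (u.v_C_sub_of_lt (h b hb)).symm

end IsAlgClosed

end ValOn

section Delta

variable {F : Type*} [Field F] {Γ : Type*} [AddCommGroup Γ] [LinearOrder Γ] [IsOrderedAddMonoid Γ]
  (u : ValOn F[X] Γ)

theorem le_deltaOf {g : F[X]} {b : F} (hb : b ∈ g.roots) :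
    ((u.v (X - C b) : WithTop Γ) : WithBot (WithTop Γ)) ≤ deltaOf u g :=
  Multiset.le_sup (Multiset.mem_map_of_mem _ hb)

theorem deltaOf_le_coe_iff {g : F[X]} {c : WithTop Γ} :
    deltaOf u g ≤ c ↔ ∀ b ∈ g.roots, u.v (X - C b) ≤ c := by
  rw [deltaOf, Multiset.sup_le, Multiset.forall_mem_map_iff]
  simp only [WithBot.coe_le_coe]

theorem exists_mem_roots_deltaOf_eq [IsAlgClosed F] {g : F[X]} (hg : g.natDegree ≠ 0) :
    ∃ a ∈ g.roots, deltaOf u g = u.v (X - C a) := by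
  obtain ⟨a, ha, ha_max⟩ :=
    Multiset.exists_max_image (fun b => u.v (X - C b)) ((IsAlgClosed.splits g).roots_ne_zero hg)
  exact ⟨a, ha, le_antisymm ((deltaOf_le_coe_iff u).mpr ha_max) (le_deltaOf u ha)⟩

end Delta

theorem Polynomial.divByMonic_divByMonic {R : Type*} [CommRing R] [Nontrivial R] {p q : R[X]}
    (hp : p.Monic) (hq : q.Monic) (f : R[X]) : f /ₘ p /ₘ q = f /ₘ (p * q) := by
  refine (div_modByMonic_unique (f /ₘ p /ₘ q) (p * (f /ₘ p %ₘ q) + f %ₘ p) (hp.mul hq)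
    ⟨?_, ?_⟩).1.symm
  · linear_combination p * modByMonic_add_div (f /ₘ p) q + modByMonic_add_div f p
  · rw [hq.degree_mul]
    refine (degree_add_le _ _).trans_lt (max_lt ?_ ?_)
    · rw [mul_comm, hp.degree_mul, add_comm]
      exact WithBot.add_lt_add_left (hp.ne_zero ∘ degree_eq_bot.mp) (degree_modByMonic_lt _ hq)
    · exact (degree_modByMonic_lt f hp).trans_le
        (le_add_of_nonneg_right (zero_le_degree_iff.mpr hq.ne_zero))

section Truncation

variable {K : Type*} [Field K] {Γ : Type*} [AddCommGroup Γ] [LinearOrder Γ] [IsOrderedAddMonoid Γ]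

theorem truncVal_one (w : ValOn K[X] Γ) (f : K[X]) : truncVal w 1 f = ⊤ :=
  top_le_iff.mp <| le_inf' _ _ fun j _ => by rw [one_pow, modByMonic_one, zero_mul, w.v_zero]

theorem truncVal_congr {μ w : ValOn K[X] Γ} {Q : K[X]} (hQ : Q.Monic) (hQv : μ.v Q = w.v Q)
    (h : ∀ g, g.degree < Q.degree → μ.v g = w.v g) (f : K[X]) :
    truncVal μ Q f = truncVal w Q f :=
  inf'_congr _ rfl fun j _ => by
    rw [μ.v_mul, w.v_mul, μ.v_pow, w.v_pow, hQv, h _ (degree_modByMonic_lt _ hQ)]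

theorem ValOn.le_truncVal_of_le_modByMonic (μ : ValOn K[X] Γ) {Q : K[X]} (hQ : Q.Monic)
    (h : ∀ g, μ.v g ≤ μ.v (g %ₘ Q)) (f : K[X]) : μ.v f ≤ truncVal μ Q f := by
  suffices ∀ j f, μ.v f ≤ μ.v ((f /ₘ Q ^ j) %ₘ Q * Q ^ j) from
    le_inf' _ _ fun j _ => this j f
  intro j
  induction j with
  | zero => simpa using h
  | succ j ih =>
    intro f
    have hdiv : μ.v f ≤ μ.v (Q * (f /ₘ Q)) := by
      have := μ.min_le_v_sub f (f %ₘ Q)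
      rwa [min_eq_left (h f), ← eq_sub_of_add_eq' (modByMonic_add_div f Q)] at this
    calc μ.v f ≤ μ.v Q + μ.v (f /ₘ Q) := hdiv.trans_eq (μ.v_mul _ _)
      _ ≤ μ.v Q + μ.v ((f /ₘ Q /ₘ Q ^ j) %ₘ Q * Q ^ j) := add_le_add_right (ih _) _
      _ = μ.v ((f /ₘ Q ^ (j + 1)) %ₘ Q * Q ^ (j + 1)) := by
        rw [pow_succ', ← divByMonic_divByMonic hQ (hQ.pow j), μ.v_mul, μ.v_mul, μ.v_mul,
          add_left_comm]

end Truncation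

section KeyPolynomials

variable {K : Type*} [Field K] {Γ : Type*} [AddCommGroup Γ] [LinearOrder Γ] [IsOrderedAddMonoid Γ]
  {wbar : ValOn (Polynomial (AlgebraicClosure K)) Γ}

theorem IsKeyPoly.delta_lt_of_degree_lt {Q g : K[X]} (hQ : IsKeyPoly wbar Q) (hg : g ≠ 0)
    (hdeg : g.degree < Q.degree) : delta wbar g < delta wbar Q :=
  not_le.mp fun h => (hQ.2 g hg h).not_gt hdeg

theorem IsKeyPoly.v_le_truncVal_of_delta_le {w : ValOn K[X] Γ} {Q : K[X]} (hQ : IsKeyPoly wbar Q)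
    (hbar : ∀ f : K[X], wbar.v (f.map (algebraMap K (AlgebraicClosure K))) = w.v f)
    {f : K[X]} (hf : delta wbar f ≤ delta wbar Q) : w.v f ≤ truncVal w Q f := by
  set φ := algebraMap K (AlgebraicClosure K)
  by_cases hQ_deg : Q.natDegree = 0
  · rw [hQ.1.natDegree_eq_zero.mp hQ_deg, truncVal_one]
    exact le_top
  obtain ⟨a, ha_root, ha⟩ :=
    exists_mem_roots_deltaOf_eq wbar (g := Q.map φ) (by rwa [natDegree_map])
  set μ := (wbar.gaussAt a).comap (mapRingHom φ)
  have hμ : ∀ g, delta wbar g ≤ delta wbar Q → μ.v g = w.v g := fun g hg =>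
    (wbar.gaussAt_eq_of_roots_le ((deltaOf_le_coe_iff wbar).mp (hg.trans_eq ha))).trans (hbar g)
  have hmod : ∀ g, μ.v g ≤ μ.v (g %ₘ Q) := by
    intro g
    rcases eq_or_ne (g %ₘ Q) 0 with hr | hr
    · rw [hr, μ.v_zero]
      exact le_top
    have hroots : ∀ b ∈ ((g %ₘ Q).map φ).roots, wbar.v (X - C b) < wbar.v (X - C a) :=
      fun b hb => WithBot.coe_lt_coe.mp <| (le_deltaOf wbar hb).trans_lt <|
        (hQ.delta_lt_of_degree_lt hr (degree_modByMonic_lt g hQ.1)).trans_eq ha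
    have heval : (g.map φ).eval a = ((g %ₘ Q).map φ).eval a := by
      conv_lhs => rw [← modByMonic_add_div g Q]
      rw [Polynomial.map_add, Polynomial.map_mul, eval_add, eval_mul, (mem_roots'.mp ha_root).2,
        zero_mul, add_zero]
    calc μ.v g ≤ wbar.v (C ((g.map φ).eval a)) := wbar.gaussAt_le_eval a _
      _ = wbar.v ((g %ₘ Q).map φ) := by rw [heval, wbar.v_eq_v_C_eval_of_roots_lt hroots]
      _ = μ.v (g %ₘ Q) := (wbar.gaussAt_eq_of_roots_le fun b hb => (hroots b hb).le).symm
  have hsmall : ∀ g, g.degree < Q.degree → μ.v g = w.v g := by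
    intro g hg
    rcases eq_or_ne g 0 with rfl | hg0
    · rw [μ.v_zero, w.v_zero]
    · exact hμ g (hQ.delta_lt_of_degree_lt hg0 hg).le
  calc w.v f = μ.v f := (hμ f hf).symm
    _ ≤ truncVal μ Q f := μ.le_truncVal_of_le_modByMonic hQ.1 hmod f
    _ = truncVal w Q f := truncVal_congr hQ.1 (hμ Q le_rfl) hsmall f

end KeyPolynomials

theorem delta_lt_delta_limitKeyPoly_general
    {K : Type*} [Field K] {Γ : Type*} [AddCommGroup Γ] [LinearOrder Γ] [IsOrderedAddMonoid Γ]
    (w : ValOn (Polynomial K) Γ)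
    (wbar : ValOn (Polynomial (AlgebraicClosure K)) Γ)
    (hbar : ∀ f : Polynomial K, wbar.v (f.map (algebraMap K (AlgebraicClosure K))) = w.v f)
    (n : ℕ) (hne : ∃ Q : Polynomial K, Q ∈ Psi wbar n)
    (Qn : Polynomial K) (hQn : IsLimitKeyPoly w wbar n Qn) :
    (∀ Q ∈ Psi wbar n, delta wbar Q < delta wbar Qn) ∧ n ≤ Qn.natDegree := by
  obtain ⟨hQn_monic, hQn_mem, -⟩ := hQn
  have hlt : ∀ Q ∈ Psi wbar n, delta wbar Q < delta wbar Qn := fun Q hQ =>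
    not_le.mp fun hle => (hQn_mem Q hQ).not_ge (hQ.1.v_le_truncVal_of_delta_le hbar hle)
  obtain ⟨Q, hQ_key, hQ_deg⟩ := hne
  exact ⟨hlt, hQ_deg ▸ natDegree_le_natDegree
    (hQ_key.2 Qn hQn_monic.ne_zero (hlt Q ⟨hQ_key, hQ_deg⟩).le)⟩

/-- For a limit key polynomial `Q_n` for `Ψ_n`:
`δ(Q) < δ(Q_n)` for every `Q ∈ Ψ_n`, and consequently `deg Q_n ≥ n`. -/
theorem delta_lt_delta_limitKeyPoly
    {K : Type*} [Field K] {Γ : Type*} [AddCommGroup Γ] [LinearOrder Γ] [IsOrderedAddMonoid Γ]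
    (w : ValOn (Polynomial K) Γ)
    (wbar : ValOn (Polynomial (AlgebraicClosure K)) Γ)
    (hbar : ∀ f : Polynomial K, wbar.v (f.map (algebraMap K (AlgebraicClosure K))) = w.v f)
    (n : ℕ) (hne : ∃ Q : Polynomial K, Q ∈ Psi wbar n)
    (hnomax : ∀ Q ∈ Psi wbar n, ∃ Q' ∈ Psi wbar n, w.v Q < w.v Q')
    (Qn : Polynomial K) (hQn : IsLimitKeyPoly w wbar n Qn) :
    (∀ Q ∈ Psi wbar n, delta wbar Q < delta wbar Qn) ∧ n ≤ Qn.natDegree :=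
  delta_lt_delta_limitKeyPoly_general w wbar hbar n hne Qn hQn
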